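/- arXiv:2006.14177 — 3 statements merged into one kernel-verified Lean document; each statement's English description precedes it below -/
import Mathlib

section
/- Let k ≥ 1 be an integer, v > 0, and suppose real numbers t ∈ [0, 1/(k·v)], p ≥ 0, and v' < k·v/(k+1) satisfy both v'(1−t) − p ≥ v'(1 − 1/(k·v)) and (k·v/(k+1)) − 1/(k+1) ≥ (k·v/(k+1))(1−t) − p. Then p = 0 and t = 1/(k·v). -/
/-! With `s = 1/(k·v) - t` the gap to the free-rider time, the low type's constraint reads
`p ≤ v'·s` and the threshold type's reads `(k·v/(k+1))·s ≤ p`, because the threshold type pays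
exactly `1/(k+1) = (k·v/(k+1))·(1/(k·v))` for the free-rider delay. As `v' < k·v/(k+1)` and
`s ≥ 0`, this squeeze forces `s = 0` and then `p = 0`. -/

theorem eq_zero_of_mul_le_of_le_mul {α : Type*} [Ring α] [LinearOrder α] [IsStrictOrderedRing α]
    {a b s p : α} (hab : a < b) (hs : 0 ≤ s) (hb : b * s ≤ p) (ha : p ≤ a * s) :
    s = 0 ∧ p = 0 := by
  have hs' : s = 0 := by
    refine le_antisymm (nonpos_of_mul_nonpos_right ?_ (sub_pos.2 hab)) hs
    calc (b - a) * s = b * s - a * s := sub_mul b a s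
      _ ≤ 0 := sub_nonpos.2 (hb.trans ha)
  subst hs'
  simp only [mul_zero] at hb ha
  exact ⟨rfl, le_antisymm ha hb⟩

theorem pinning_down_general (k : ℕ) (v : ℝ)
    (hkv : 1 ≤ (k:ℝ) * v)
    (t p v' : ℝ)
    (ht1 : t ≤ 1 / ((k:ℝ) * v))
    (hv' : v' < (k:ℝ) * v / (k + 1))
    (h1 : v' * (1 - t) - p ≥ v' * (1 - 1 / ((k:ℝ) * v)))
    (h2 : (k:ℝ) * v / (k + 1) - 1 / (k + 1) ≥ ((k:ℝ) * v / (k + 1)) * (1 - t) - p) :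
    p = 0 ∧ t = 1 / ((k:ℝ) * v) := by
  have hkv0 : (k:ℝ) * v ≠ 0 := (one_pos.trans_le hkv).ne'
  have hthreshold : (k:ℝ) * v / (k + 1) * (1 / ((k:ℝ) * v)) = 1 / (k + 1) := by
    rw [mul_one_div, div_right_comm, div_self hkv0]
  have hlow : (k:ℝ) * v / (k + 1) * (1 / ((k:ℝ) * v) - t) ≤ p := by linarith
  have hhigh : p ≤ v' * (1 / ((k:ℝ) * v) - t) := by linarith
  obtain ⟨hgap, hp⟩ := eq_zero_of_mul_le_of_le_mul hv' (sub_nonneg.2 ht1) hlow hhigh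
  exact ⟨hp, (sub_eq_zero.1 hgap).symm⟩

/-- The pinning-down argument: the two incentive inequalities force p = 0 and
t = 1/(k·v). -/
theorem pinning_down (k : ℕ) (hk : 1 ≤ k) (v : ℝ) (hv : 0 < v)
    (hkv : 1 ≤ (k:ℝ) * v)
    (t p v' : ℝ)
    (ht0 : 0 ≤ t) (ht1 : t ≤ 1 / ((k:ℝ) * v))
    (hp : 0 ≤ p)
    (hv'pos : 0 < v') (hv' : v' < (k:ℝ) * v / (k + 1))
    (h1 : v' * (1 - t) - p ≥ v' * (1 - 1 / ((k:ℝ) * v)))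
    (h2 : (k:ℝ) * v / (k + 1) - 1 / (k + 1) ≥ ((k:ℝ) * v / (k + 1)) * (1 - t) - p) :
    p = 0 ∧ t = 1 / ((k:ℝ) * v) :=
  pinning_down_general k v hkv t p v' ht1 hv' h1 h2
end

section
/- Under GCSOD with left-group optimal deadline D_L and right-group optimal deadline D_R with D_L < D_R: the left group faces deadline D_R > D_L and therefore its cost sharing succeeds (the set K(D_R) for the left group is nonempty), while the right group faces deadline D_L < D_R and its cost sharing fails (the set K(D_L) for the right group is empty). Hence exactly one group's members make payments totaling 1, so GCSOD is ex post budget balanced whenever D_L ≠ D_R. -/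
theorem gcsod_one_group_succeeds_general
    (KL KR : ℝ → Set ℕ) (DL DR : ℝ)
    (hmonoL : ∀ s t : ℝ, s ≤ t → KL s ⊆ KL t)
    (hLopt : (KL DL).Nonempty ∧ ∀ t : ℝ, (KL t).Nonempty → DL ≤ t)
    (hRopt : ∀ t : ℝ, (KR t).Nonempty → DR ≤ t)
    (h : DL < DR) :
    (KL DR).Nonempty ∧ KR DL = ∅ :=
  ⟨hLopt.1.mono (hmonoL DL DR h.le),
    Set.not_nonempty_iff_eq_empty.1 fun hne => (hRopt DL hne).not_gt h⟩

/-- Under GCSOD with D_L < D_R: the left group's cost sharing (facing deadline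
D_R) succeeds, and the right group's cost sharing (facing deadline D_L) fails. -/
theorem gcsod_one_group_succeeds
    (KL KR : ℝ → Set ℕ) (DL DR : ℝ)
    (hmonoL : ∀ s t : ℝ, s ≤ t → KL s ⊆ KL t)
    (hmonoR : ∀ s t : ℝ, s ≤ t → KR s ⊆ KR t)
    (hLopt : (KL DL).Nonempty ∧ ∀ t : ℝ, (KL t).Nonempty → DL ≤ t)
    (hRopt : ∀ t : ℝ, (KR t).Nonempty → DR ≤ t)
    (h : DL < DR) :
    (KL DR).Nonempty ∧ KR DL = ∅ :=
  gcsod_one_group_succeeds_general KL KR DL DR hmonoL hLopt hRopt h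
end

section
/- For every integer k ≥ 1, the quantity α(k) = (1/2^k) · Σ_{j=0}^{k} C(k,j) · k / max{1, min{j, k−j}} satisfies α(k) ≤ 4. -/
/-!
Split the summands at `s = ⌈k/2⌉`. For `1 ≤ j < s` the minimum is `j`, and
`C(k,j) (k - j) = C(k,j+1) (j+1) ≤ 2j C(k,j+1)` gives `C(k,j) k / j ≤ C(k,j) + 2 C(k,j+1)`;
symmetrically `C(k,j) k / (k - j) ≤ C(k,j) + 2 C(k,j-1)` for `s ≤ j < k`. The shifted
coefficients cover `C(k,2), …, C(k,k-2)` once, except for `C(k,s-1) + C(k,s) = C(k+1,s)`, which is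
covered twice. Hence `2^k α(k) ≤ 3·2^k + 2 C(k+1,s) - 2k - 6`, and `C(k+1,s) ≤ 2^(k-1)` once
`k ≥ 8` (smaller `k` are checked directly).
-/

open Finset

namespace Nat

theorem choose_mul_le_mul_add_two_mul_choose_succ {n j : ℕ} (hj : 1 ≤ j) :
    n.choose j * n ≤ (n.choose j + 2 * n.choose (j + 1)) * j :=
  calc n.choose j * n ≤ n.choose j * j + n.choose j * (n - j) := by
        rw [← Nat.mul_add]; exact Nat.mul_le_mul_left _ (by omega)
    _ = n.choose j * j + n.choose (j + 1) * (j + 1) := by rw [choose_succ_right_eq]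
    _ ≤ n.choose j * j + n.choose (j + 1) * (2 * j) := by gcongr; omega
    _ = (n.choose j + 2 * n.choose (j + 1)) * j := by ring

theorem choose_mul_le_mul_add_two_mul_choose_pred {n j : ℕ} (hj : 1 ≤ j) (hjn : j < n) :
    n.choose j * n ≤ (n.choose j + 2 * n.choose (j - 1)) * (n - j) := by
  have h := choose_mul_le_mul_add_two_mul_choose_succ (n := n) (j := n - j) (by omega)
  rwa [choose_symm hjn.le, show n - j + 1 = n - (j - 1) by omega,
    choose_symm (by omega : j - 1 ≤ n)] at h

theorem choose_succ_le_two_mul_choose_half (n r : ℕ) :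
    (n + 1).choose r ≤ 2 * n.choose (n / 2) := by
  cases r with
  | zero =>
    rw [choose_zero_right]
    have := choose_pos (n.div_le_self 2)
    omega
  | succ r =>
    rw [choose_succ_succ']
    have := choose_le_middle r n
    have := choose_le_middle (r + 1) n
    omega

theorem four_mul_choose_half_le_two_pow {n : ℕ} (hn : 9 ≤ n) :
    4 * n.choose (n / 2) ≤ 2 ^ n := by
  induction n, hn using Nat.le_induction with
  | base => decide
  | succ n hn ih =>
    have := choose_succ_le_two_mul_choose_half n ((n + 1) / 2)
    rw [pow_succ]
    omega

theorem sum_Ico_one_choose {n : ℕ} (hn : 1 ≤ n) : ∑ j ∈ Ico 1 n, n.choose j + 2 = 2 ^ n := by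
  rw [← sum_range_choose, sum_range_succ, sum_range_eq_add_Ico _ (by omega : 0 < n)]
  simp only [choose_zero_right, choose_self]
  ring

theorem sum_Ico_choose_succ_add_sum_Ico_choose_pred {n s : ℕ} (hs : 1 ≤ s) (hsn : s ≤ n) :
    ∑ j ∈ Ico 1 s, n.choose (j + 1) + ∑ j ∈ Ico s n, n.choose (j - 1) + 2 * (n + 1)
      = 2 ^ n + (n + 1).choose s := by
  have left : ∑ j ∈ Ico 1 s, n.choose (j + 1) = ∑ i ∈ Ico 2 (s + 1), n.choose i :=
    sum_Ico_add' _ 1 s 1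
  have right : ∑ j ∈ Ico s n, n.choose (j - 1) = ∑ i ∈ Ico (s - 1) (n - 1), n.choose i := by
    have := sum_Ico_add_right_sub_eq (f := n.choose) (s - 1) (n - 1) 1
    rwa [Nat.sub_add_cancel hs, Nat.sub_add_cancel (by omega : 1 ≤ n)] at this
  have bottom : ∑ i ∈ Ico 0 2, n.choose i = n + 1 := by simp [sum_range_succ, add_comm]
  have top : ∑ i ∈ Ico (n - 1) (n + 1), n.choose i = n + 1 := by
    have : n.choose (n - 1) = n := by
      rw [choose_symm_of_eq_add (by omega : n = n - 1 + 1), choose_one_right]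
    rw [sum_Ico_eq_sum_range, show n + 1 - (n - 1) = 2 by omega]
    simp [sum_range_succ, this, show n - 1 + 1 = n by omega]
  have middle : ∑ i ∈ Ico (s - 1) (s + 1), n.choose i = (n + 1).choose s := by
    obtain ⟨t, rfl⟩ : ∃ t, s = t + 1 := ⟨s - 1, by omega⟩
    rw [choose_succ_succ', sum_Ico_eq_sum_range, show t + 1 + 1 - (t + 1 - 1) = 2 by omega]
    simp [sum_range_succ]
  have total : ∑ i ∈ Ico 0 (n + 1), n.choose i = 2 ^ n := by
    rw [← range_eq_Ico, sum_range_choose]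
  have h₁ := sum_Ico_consecutive n.choose (zero_le 2) (by omega : 2 ≤ s + 1)
  have h₂ := sum_Ico_consecutive n.choose (zero_le (s + 1)) (by omega : s + 1 ≤ n + 1)
  have h₃ := sum_Ico_consecutive n.choose (by omega : s - 1 ≤ s + 1) (by omega : s + 1 ≤ n + 1)
  have h₄ := sum_Ico_consecutive n.choose (by omega : s - 1 ≤ n - 1) (by omega : n - 1 ≤ n + 1)
  omega

theorem two_mul_choose_succ_half_le (k : ℕ) :
    2 * (k + 1).choose ((k + 1) / 2) ≤ 2 ^ k + 2 * k + 6 := by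
  rcases le_or_gt 8 k with hk | hk
  · have := four_mul_choose_half_le_two_pow (n := k + 1) (by omega)
    rw [pow_succ] at this
    omega
  · interval_cases k <;> decide

end Nat

noncomputable def alphaTerm (k j : ℕ) : ℝ :=
  (k.choose j : ℝ) * k / ((max 1 (min j (k - j)) : ℕ) : ℝ)

theorem alphaTerm_zero (k : ℕ) : alphaTerm k 0 = k := by
  simp [alphaTerm]

theorem alphaTerm_self (k : ℕ) : alphaTerm k k = k := by
  simp [alphaTerm]

theorem alphaTerm_le_of_mul_le {k j b : ℕ}
    (h : k.choose j * k ≤ b * max 1 (min j (k - j))) : alphaTerm k j ≤ b := by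
  rw [alphaTerm, div_le_iff₀ (by positivity)]
  exact_mod_cast h

theorem alphaTerm_le_of_two_mul_le {k j : ℕ} (hj : 1 ≤ j) (hjk : 2 * j ≤ k) :
    alphaTerm k j ≤ ((k.choose j + 2 * k.choose (j + 1) : ℕ) : ℝ) := by
  apply alphaTerm_le_of_mul_le
  rw [min_eq_left (by omega), max_eq_right hj]
  exact Nat.choose_mul_le_mul_add_two_mul_choose_succ hj

theorem alphaTerm_le_of_le_two_mul {k j : ℕ} (hj : 1 ≤ j) (hkj : k ≤ 2 * j) (hjk : j < k) :
    alphaTerm k j ≤ ((k.choose j + 2 * k.choose (j - 1) : ℕ) : ℝ) := by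
  apply alphaTerm_le_of_mul_le
  rw [min_eq_right (by omega), max_eq_right (by omega)]
  exact Nat.choose_mul_le_mul_add_two_mul_choose_pred hj hjk

theorem sum_alphaTerm_le {k s : ℕ} (hs : 1 ≤ s) (hsk : s ≤ k) (hlow : k ≤ 2 * s)
    (hhigh : 2 * s ≤ k + 2) :
    ∑ j ∈ range (k + 1), alphaTerm k j ≤
      ((2 * k + ∑ j ∈ Ico 1 k, k.choose j +
        2 * (∑ j ∈ Ico 1 s, k.choose (j + 1) + ∑ j ∈ Ico s k, k.choose (j - 1)) : ℕ) : ℝ) := by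
  have split : ∑ j ∈ range (k + 1), alphaTerm k j = alphaTerm k 0 +
      (∑ j ∈ Ico 1 s, alphaTerm k j + ∑ j ∈ Ico s k, alphaTerm k j) + alphaTerm k k := by
    rw [sum_range_succ, sum_range_eq_add_Ico _ (by omega), sum_Ico_consecutive _ hs hsk]
  have left : ∑ j ∈ Ico 1 s, alphaTerm k j ≤
      ∑ j ∈ Ico 1 s, ((k.choose j + 2 * k.choose (j + 1) : ℕ) : ℝ) :=
    sum_le_sum fun j hj => by
      obtain ⟨h₁, h₂⟩ := mem_Ico.1 hj
      exact alphaTerm_le_of_two_mul_le h₁ (by omega)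
  have right : ∑ j ∈ Ico s k, alphaTerm k j ≤
      ∑ j ∈ Ico s k, ((k.choose j + 2 * k.choose (j - 1) : ℕ) : ℝ) :=
    sum_le_sum fun j hj => by
      obtain ⟨h₁, h₂⟩ := mem_Ico.1 hj
      exact alphaTerm_le_of_le_two_mul (by omega) (by omega) h₂
  have regroup : ((2 * k + ∑ j ∈ Ico 1 k, k.choose j +
      2 * (∑ j ∈ Ico 1 s, k.choose (j + 1) + ∑ j ∈ Ico s k, k.choose (j - 1)) : ℕ) : ℝ) =
      k + (∑ j ∈ Ico 1 s, ((k.choose j + 2 * k.choose (j + 1) : ℕ) : ℝ) +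
        ∑ j ∈ Ico s k, ((k.choose j + 2 * k.choose (j - 1) : ℕ) : ℝ)) + k := by
    rw [← sum_Ico_consecutive _ hs hsk]
    push_cast
    simp only [sum_add_distrib, ← mul_sum]
    ring
  rw [split, alphaTerm_zero, alphaTerm_self, regroup]
  linarith

open Finset in
/-- For every k ≥ 1, α(k) = 2^{-k} Σ_j C(k,j)·k/max{1,min{j,k−j}} ≤ 4. -/
theorem alpha_le_four (k : ℕ) (hk : 1 ≤ k) :
    (1 / 2 ^ k : ℝ) *
      ∑ j ∈ Finset.range (k + 1),
        (k.choose j : ℝ) * k / ((max 1 (min j (k - j)) : ℕ) : ℝ) ≤ 4 := by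
  have hs : 1 ≤ (k + 1) / 2 ∧ (k + 1) / 2 ≤ k := by omega
  have hsum := sum_alphaTerm_le hs.1 hs.2 (by omega) (by omega)
  have hcount := Nat.sum_Ico_one_choose hk
  have hshift := Nat.sum_Ico_choose_succ_add_sum_Ico_choose_pred hs.1 hs.2
  have hcentral := Nat.two_mul_choose_succ_half_le k
  rw [one_div, inv_mul_le_iff₀ (by positivity)]
  refine hsum.trans ?_
  exact_mod_cast (by omega : _ ≤ 2 ^ k * 4)
end
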